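/- For every point x in the complement of K, the vector u_K(x) = (1/⟪p_K(x) − x, p_K(x)⟫) • (x − p_K(x)) lies in the frontier of the polar dual K°, and ⟪u_K(x), p_K(x)⟫ = −1. -/

import Mathlib

/-!
The obtuse-angle criterion for the nearest point `p` of `K` to `x` says that `v = x - p` satisfies
`⟪v, w⟫ ≤ ⟪v, p⟫` on `K`; since a small positive multiple of `v` lies in `K`, `⟪v, p⟫ > 0`.
Rescaling `v` by `-1/⟪v, p⟫` therefore gives `u ∈ K°` with `⟪u, p⟫ = -1`, and such a point
is on the frontier of `K°` because `(1 + t) • u ∉ K°` for every `t > 0`.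
-/

open scoped RealInnerProductSpace
open Filter Topology Set

variable {E : Type*} [NormedAddCommGroup E] [InnerProductSpace ℝ E]

def polarDual (K : Set E) : Set E := {ℓ | ∀ y ∈ K, -1 ≤ ⟪ℓ, y⟫}

theorem mem_frontier_polarDual_of_inner_eq_neg_one {K : Set E} {ℓ y : E}
    (hℓ : ℓ ∈ polarDual K) (hy : y ∈ K) (h : ⟪ℓ, y⟫ = -1) : ℓ ∈ frontier (polarDual K) := by
  refine ⟨subset_closure hℓ, fun hint => ?_⟩
  have hlim : Tendsto (fun t : ℝ => (1 + t) • ℓ) (𝓝[>] 0) (𝓝 ℓ) := by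
    have := ((tendsto_const_nhds (x := (1 : ℝ))).add (tendsto_id (x := 𝓝 (0 : ℝ)))).smul_const ℓ
    simpa using this.mono_left nhdsWithin_le_nhds
  obtain ⟨t, hmem, ht⟩ :=
    ((hlim.eventually (isOpen_interior.mem_nhds hint)).and self_mem_nhdsWithin).exists
  have := interior_subset hmem y hy
  rw [real_inner_smul_left, h] at this
  linarith [show (0 : ℝ) < t from ht]

theorem Convex.inner_sub_sub_nonpos_of_forall_dist_le {K : Set E} (hK : Convex ℝ K) {x p : E}
    (hp : p ∈ K) (hmin : ∀ y ∈ K, dist x p ≤ dist x y) : ∀ w ∈ K, ⟪x - p, w - p⟫ ≤ 0 := by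
  have : Nonempty K := ⟨⟨p, hp⟩⟩
  refine (norm_eq_iInf_iff_real_inner_le_zero hK hp).mp (le_antisymm ?_ ?_)
  · exact le_ciInf fun w => by simpa [dist_eq_norm] using hmin w w.2
  · exact ciInf_le ⟨0, by rintro r ⟨w, rfl⟩; positivity⟩ (⟨p, hp⟩ : K)

theorem inner_pos_of_zero_mem_interior {K : Set E} (h0 : 0 ∈ interior K) {v p : E} (hv : v ≠ 0)
    (hsupp : ∀ w ∈ K, ⟪v, w - p⟫ ≤ 0) : 0 < ⟪v, p⟫ := by
  have hlim : Tendsto (fun t : ℝ => t • v) (𝓝[>] 0) (𝓝 0) := by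
    simpa using ((tendsto_id (x := 𝓝 (0 : ℝ))).smul_const v).mono_left nhdsWithin_le_nhds
  obtain ⟨t, htK, ht⟩ :=
    ((hlim.eventually (mem_interior_iff_mem_nhds.mp h0)).and self_mem_nhdsWithin).exists
  have := hsupp _ htK
  rw [inner_sub_right, real_inner_smul_right, real_inner_self_eq_norm_sq] at this
  have : 0 < t * ‖v‖ ^ 2 := mul_pos ht (by positivity)
  linarith

theorem stmt_1_general {n : ℕ}
    (K : Set (EuclideanSpace ℝ (Fin n)))
    (hKconv : Convex ℝ K)
    (h0 : (0 : EuclideanSpace ℝ (Fin n)) ∈ interior K)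
    (p : EuclideanSpace ℝ (Fin n) → EuclideanSpace ℝ (Fin n))
    (hpmem : ∀ x, p x ∈ K)
    (hpmin : ∀ x, ∀ y ∈ K, dist x (p x) ≤ dist x y)
    (x : EuclideanSpace ℝ (Fin n)) (hx : x ∉ K) :
    (1 / ⟪p x - x, p x⟫) • (x - p x) ∈
        frontier {ℓ : EuclideanSpace ℝ (Fin n) | ∀ y ∈ K, -1 ≤ ⟪ℓ, y⟫} ∧
      ⟪(1 / ⟪p x - x, p x⟫) • (x - p x), p x⟫ = -1 := by
  have hsupp := hKconv.inner_sub_sub_nonpos_of_forall_dist_le (hpmem x) (hpmin x)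
  have hpos : 0 < ⟪x - p x, p x⟫ :=
    inner_pos_of_zero_mem_interior h0 (sub_ne_zero.2 fun h => hx (h ▸ hpmem x)) hsupp
  have hc : ⟪p x - x, p x⟫ = -⟪x - p x, p x⟫ := by rw [← inner_neg_left, neg_sub]
  have hinner : ⟪(1 / ⟪p x - x, p x⟫) • (x - p x), p x⟫ = -1 := by
    rw [real_inner_smul_left, hc]
    field_simp
  have hmem : (1 / ⟪p x - x, p x⟫) • (x - p x) ∈ polarDual K := by
    intro y hy
    have := hsupp y hy
    rw [inner_sub_right] at this
    rw [real_inner_smul_left, hc, one_div, ← div_eq_inv_mul, le_div_iff_of_neg (by linarith)]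
    linarith
  exact ⟨mem_frontier_polarDual_of_inner_eq_neg_one hmem (hpmem x) hinner, hinner⟩

/-- For every `x ∉ K`, the vector `u_K(x) = (1/⟪p_K(x) − x, p_K(x)⟫) • (x − p_K(x))`
lies in the frontier of the polar dual `K°`, and `⟪u_K(x), p_K(x)⟫ = −1`. -/
theorem stmt_1 {n : ℕ} (hn : 0 < n)
    (K : Set (EuclideanSpace ℝ (Fin n)))
    (hKcomp : IsCompact K) (hKconv : Convex ℝ K)
    (h0 : (0 : EuclideanSpace ℝ (Fin n)) ∈ interior K)
    (p : EuclideanSpace ℝ (Fin n) → EuclideanSpace ℝ (Fin n))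
    (hpmem : ∀ x, p x ∈ K)
    (hpmin : ∀ x, ∀ y ∈ K, dist x (p x) ≤ dist x y)
    (x : EuclideanSpace ℝ (Fin n)) (hx : x ∉ K) :
    (1 / ⟪p x - x, p x⟫) • (x - p x) ∈
        frontier {ℓ : EuclideanSpace ℝ (Fin n) | ∀ y ∈ K, -1 ≤ ⟪ℓ, y⟫} ∧
      ⟪(1 / ⟪p x - x, p x⟫) • (x - p x), p x⟫ = -1 :=
  stmt_1_general K hKconv h0 p hpmem hpmin x hx
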